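/- Let R* and R̂ be probability measures on X × Y with the same marginals on X and on Y, and let W be a third probability measure on X × Y with all measures mutually absolutely continuous. If log(dW/dR̂)(x,y) = f(x) + g(y) for functions f, g integrable with respect to the common marginals, then KL(R*‖R̂) − KL(R*‖W) = E_{R̂}[log(dW/dR*)] − KL(R̂‖R*) ≤ E_{R̂}[log(dW/dR*)]. -/

import Mathlib

/-! By the chain rule for log-likelihood ratios, `log dR*/dW = log dR*/dR̂ - log dW/dR̂`
`R*`-a.e., so `KL(R*‖R̂) - KL(R*‖W) = E_{R*}[f(x) + g(y)]`. Since `f(x) + g(y)` only sees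
the marginals, this is `E_{R̂}[f(x) + g(y)] = E_{R̂}[log dW/dR̂]`, and the chain rule once more,
now `R̂`-a.e., gives `log dW/dR̂ = log dW/dR* - log dR̂/dR*`. The inequality is Gibbs'
inequality `KL(R̂‖R*) ≥ 0`. -/

open MeasureTheory

/-- The Kullback–Leibler divergence `KL(P‖Q) = ∫ log (dP/dQ) dP`. -/
noncomputable def KL {Ω : Type*} [MeasurableSpace Ω] (P Q : Measure Ω) : ℝ :=
  ∫ ω, Real.log (P.rnDeriv Q ω).toReal ∂P

open InformationTheory

section LogLikelihoodRatio

variable {α : Type*} [MeasurableSpace α] {μ ν κ : Measure α}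

lemma KL_eq_integral_llr (μ ν : Measure α) : KL μ ν = ∫ x, llr μ ν x ∂μ := rfl

lemma KL_nonneg [IsProbabilityMeasure μ] [IsProbabilityMeasure ν] (hμν : μ ≪ ν)
    (h_int : Integrable (llr μ ν) μ) : 0 ≤ KL μ ν := by
  simpa [KL_eq_integral_llr] using integral_llr_add_sub_measure_univ_nonneg hμν h_int

variable [SigmaFinite μ] [SigmaFinite ν] [SigmaFinite κ]

lemma llr_ae_eq_llr_add_llr (hμν : μ ≪ ν) (hνκ : ν ≪ κ) :
    llr μ κ =ᵐ[μ] llr μ ν + llr ν κ := by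
  filter_upwards [hμν.ae_le (Measure.rnDeriv_mul_rnDeriv' (μ := μ) hνκ),
    Measure.rnDeriv_pos hμν, hμν.ae_le (Measure.rnDeriv_pos hνκ),
    hμν.ae_le (Measure.rnDeriv_lt_top μ ν), (hμν.trans hνκ).ae_le (Measure.rnDeriv_lt_top ν κ)]
    with x h_mul h_pos₁ h_pos₂ h_fin₁ h_fin₂
  simp only [llr_def, Pi.add_apply, ← h_mul, Pi.mul_apply, ENNReal.toReal_mul]
  exact Real.log_mul (ENNReal.toReal_pos h_pos₁.ne' h_fin₁.ne).ne'
    (ENNReal.toReal_pos h_pos₂.ne' h_fin₂.ne).ne'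

lemma llr_ae_eq_llr_sub_llr (hμν : μ ≪ ν) (hνκ : ν ≪ κ) :
    llr μ κ =ᵐ[μ] llr μ ν - llr κ ν := by
  filter_upwards [llr_ae_eq_llr_add_llr hμν hνκ, hμν.ae_le (neg_llr hνκ)] with x h_add h_neg
  rw [h_add, Pi.add_apply, Pi.sub_apply, ← h_neg, Pi.neg_apply, sub_neg_eq_add]

lemma llr_ae_eq_llr_add_llr' (hμν : μ ≪ ν) (hνμ : ν ≪ μ) (hμκ : μ ≪ κ) :
    llr κ ν =ᵐ[μ] llr κ μ + llr μ ν := by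
  filter_upwards [llr_ae_eq_llr_sub_llr hμν (hνμ.trans hμκ), neg_llr hμκ] with x h_sub h_neg
  rw [Pi.add_apply, ← h_neg, Pi.neg_apply, h_sub, Pi.sub_apply]
  ring

lemma KL_eq_KL_sub_integral_llr (hμν : μ ≪ ν) (hνκ : ν ≪ κ) (hμν_int : Integrable (llr μ ν) μ)
    (hκν_int : Integrable (llr κ ν) μ) :
    KL μ κ = KL μ ν - ∫ x, llr κ ν x ∂μ := by
  rw [KL_eq_integral_llr, KL_eq_integral_llr, ← integral_sub hμν_int hκν_int]
  exact integral_congr_ae (llr_ae_eq_llr_sub_llr hμν hνκ)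

lemma integral_llr_eq_integral_llr_add_KL (hμν : μ ≪ ν) (hνμ : ν ≪ μ) (hμκ : μ ≪ κ)
    (hκμ_int : Integrable (llr κ μ) μ) (hμν_int : Integrable (llr μ ν) μ) :
    ∫ x, llr κ ν x ∂μ = ∫ x, llr κ μ x ∂μ + KL μ ν := by
  rw [KL_eq_integral_llr, ← integral_add hκμ_int hμν_int]
  exact integral_congr_ae (llr_ae_eq_llr_add_llr' hμν hνμ hμκ)

end LogLikelihoodRatio

section Marginals

variable {X Y : Type*} [MeasurableSpace X] [MeasurableSpace Y] {μ : Measure (X × Y)}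
  {f : X → ℝ} {g : Y → ℝ}

lemma integrable_add_fst_snd (hf : Integrable f (μ.map Prod.fst))
    (hg : Integrable g (μ.map Prod.snd)) : Integrable (fun z => f z.1 + g z.2) μ :=
  (hf.comp_measurable measurable_fst).add (hg.comp_measurable measurable_snd)

lemma integral_add_fst_snd (hf : Integrable f (μ.map Prod.fst))
    (hg : Integrable g (μ.map Prod.snd)) :
    ∫ z, f z.1 + g z.2 ∂μ = ∫ x, f x ∂(μ.map Prod.fst) + ∫ y, g y ∂(μ.map Prod.snd) := by
  have hf' : Integrable (fun z => f z.1) μ := hf.comp_measurable measurable_fst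
  have hg' : Integrable (fun z => g z.2) μ := hg.comp_measurable measurable_snd
  rw [integral_add hf' hg', integral_map measurable_fst.aemeasurable hf.aestronglyMeasurable,
    integral_map measurable_snd.aemeasurable hg.aestronglyMeasurable]

end Marginals

theorem kl_diff_eq_and_le_general {X Y : Type*} [MeasurableSpace X] [MeasurableSpace Y]
    (Rs Rh W : Measure (X × Y)) [IsProbabilityMeasure Rs] [IsProbabilityMeasure Rh]
    [IsProbabilityMeasure W]
    (hX : Rs.map Prod.fst = Rh.map Prod.fst) (hY : Rs.map Prod.snd = Rh.map Prod.snd)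
    (h1 : Rs ≪ Rh) (h2 : Rh ≪ Rs) (h5 : Rh ≪ W)
    (f : X → ℝ) (g : Y → ℝ)
    (hfi : Integrable f (Rs.map Prod.fst)) (hgi : Integrable g (Rs.map Prod.snd))
    (heq : ∀ᵐ z ∂ Rh, Real.log (W.rnDeriv Rh z).toReal = f z.1 + g z.2)
    (hiA : Integrable (fun z => Real.log (Rs.rnDeriv Rh z).toReal) Rs)
    (hiD : Integrable (fun z => Real.log (Rh.rnDeriv Rs z).toReal) Rh) :
    KL Rs Rh - KL Rs W
        = (∫ z, Real.log (W.rnDeriv Rs z).toReal ∂ Rh) - KL Rh Rs ∧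
      KL Rs Rh - KL Rs W ≤ ∫ z, Real.log (W.rnDeriv Rs z).toReal ∂ Rh := by
  have hfi' : Integrable f (Rh.map Prod.fst) := hX ▸ hfi
  have hgi' : Integrable g (Rh.map Prod.snd) := hY ▸ hgi
  have hW_Rh : llr W Rh =ᵐ[Rh] fun z => f z.1 + g z.2 := heq
  have hW_Rs : llr W Rh =ᵐ[Rs] fun z => f z.1 + g z.2 := h1.ae_le heq
  have h_int_Rs : Integrable (llr W Rh) Rs := (integrable_add_fst_snd hfi hgi).congr hW_Rs.symm
  have h_int_Rh : Integrable (llr W Rh) Rh := (integrable_add_fst_snd hfi' hgi').congr hW_Rh.symm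
  have h_eq : KL Rs Rh - KL Rs W = (∫ z, llr W Rs z ∂ Rh) - KL Rh Rs := by
    rw [KL_eq_KL_sub_integral_llr h1 h5 hiA h_int_Rs,
      integral_llr_eq_integral_llr_add_KL h2 h1 h5 h_int_Rh hiD, integral_congr_ae hW_Rs,
      integral_congr_ae hW_Rh, integral_add_fst_snd hfi hgi, integral_add_fst_snd hfi' hgi', hX, hY]
    ring
  exact ⟨h_eq, h_eq ▸ sub_le_self _ (KL_nonneg h2 hiD)⟩

/-- Let `R*`, `R̂` be probability measures on `X × Y` with identical marginals, `W` a third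
measure, all mutually absolutely continuous with integrable log-densities. If
`log (dW/dR̂)(x,y) = f(x) + g(y)` for integrable `f`, `g`, then
`KL(R*‖R̂) − KL(R*‖W) = E_{R̂}[log (dW/dR*)] − KL(R̂‖R*) ≤ E_{R̂}[log (dW/dR*)]`. -/
theorem kl_diff_eq_and_le {X Y : Type*} [MeasurableSpace X] [MeasurableSpace Y]
    (Rs Rh W : Measure (X × Y)) [IsProbabilityMeasure Rs] [IsProbabilityMeasure Rh]
    [IsProbabilityMeasure W]
    (hX : Rs.map Prod.fst = Rh.map Prod.fst) (hY : Rs.map Prod.snd = Rh.map Prod.snd)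
    (h1 : Rs ≪ Rh) (h2 : Rh ≪ Rs) (h3 : Rs ≪ W) (h4 : W ≪ Rs) (h5 : Rh ≪ W) (h6 : W ≪ Rh)
    (f : X → ℝ) (g : Y → ℝ) (hf : Measurable f) (hg : Measurable g)
    (hfi : Integrable f (Rs.map Prod.fst)) (hgi : Integrable g (Rs.map Prod.snd))
    (heq : ∀ᵐ z ∂ Rh, Real.log (W.rnDeriv Rh z).toReal = f z.1 + g z.2)
    (hiA : Integrable (fun z => Real.log (Rs.rnDeriv Rh z).toReal) Rs)
    (hiB : Integrable (fun z => Real.log (Rs.rnDeriv W z).toReal) Rs)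
    (hiC : Integrable (fun z => Real.log (W.rnDeriv Rs z).toReal) Rh)
    (hiD : Integrable (fun z => Real.log (Rh.rnDeriv Rs z).toReal) Rh) :
    KL Rs Rh - KL Rs W
        = (∫ z, Real.log (W.rnDeriv Rs z).toReal ∂ Rh) - KL Rh Rs ∧
      KL Rs Rh - KL Rs W ≤ ∫ z, Real.log (W.rnDeriv Rs z).toReal ∂ Rh :=
  kl_diff_eq_and_le_general Rs Rh W hX hY h1 h2 h5 f g hfi hgi heq hiA hiD
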